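/- arXiv:2410.09027 — 6 statements merged into one kernel-verified Lean document; each statement's English description precedes it below -/
import Mathlib

section
/- Let m ≥ 1 and let the index set {1,…,m} be partitioned into disjoint sets S0 and S1. For each n ∈ ℕ, let p_{1,n},…,p_{m,n} be random variables with values in [0,1] on a probability space (Ω_n, P_n). Fix α ∈ (0,1). Assume level-α validity on S0 (for every j ∈ S0 and every n, P_n(p_{j,n} ≤ α) ≤ α) and consistency on S1 (for every j ∈ S1, P_n(p_{j,n} > α) → 0 as n → ∞). Then liminf_{n→∞} P_n({j ∈ {1,…,m} : p_{j,n} > α} = S0) ≥ 1 − m·α. -/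
open MeasureTheory Filter ENNReal

theorem stmt_2 {m : ℕ} (hm : 1 ≤ m)
    (S0 S1 : Finset (Fin m)) (hdisj : Disjoint S0 S1)
    (hcover : S0 ∪ S1 = Finset.univ)
    (Ω : ℕ → Type) [inst : ∀ n, MeasurableSpace (Ω n)]
    (P : ∀ n, Measure (Ω n)) [hP : ∀ n, IsProbabilityMeasure (P n)]
    (p : ∀ n, Fin m → Ω n → ℝ)
    (hpmeas : ∀ n j, Measurable (p n j))
    (hrange : ∀ n j ω, p n j ω ∈ Set.Icc (0 : ℝ) 1)
    (α : ℝ) (hα : α ∈ Set.Ioo (0 : ℝ) 1)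
    (hlevel : ∀ j ∈ S0, ∀ n, P n {ω | p n j ω ≤ α} ≤ ENNReal.ofReal α)
    (hcons : ∀ j ∈ S1,
      Tendsto (fun n => P n {ω | α < p n j ω}) atTop (nhds 0)) :
    1 - (m : ℝ≥0∞) * ENNReal.ofReal α ≤
      Filter.liminf
        (fun n => P n {ω | {j | α < p n j ω} = (↑S0 : Set (Fin m))}) atTop := by
  set c : ℝ≥0∞ := (m : ℝ≥0∞) * ENNReal.ofReal α with hc
  set g : ℕ → ℝ≥0∞ := fun n => ∑ j ∈ S1, P n {ω | α < p n j ω} with hg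
  have hgt : Tendsto g atTop (nhds 0) := by
    have := tendsto_finset_sum S1 (fun j hj => hcons j hj)
    simpa using this
  have key : ∀ n, 1 - (c + g n) ≤
      P n {ω | {j | α < p n j ω} = (↑S0 : Set (Fin m))} := by
    intro n
    set E : Set (Ω n) := {ω | {j | α < p n j ω} = (↑S0 : Set (Fin m))} with hE
    have hsub : Eᶜ ⊆ (⋃ j ∈ S0, {ω | p n j ω ≤ α}) ∪ (⋃ j ∈ S1, {ω | α < p n j ω}) := by
      intro ω hω
      by_contra h
      simp only [Set.mem_union, Set.mem_iUnion, Set.mem_setOf_eq, not_or, not_exists] at h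
      obtain ⟨h1, h2⟩ := h
      apply hω
      show {j | α < p n j ω} = (↑S0 : Set (Fin m))
      ext j
      simp only [Set.mem_setOf_eq, Finset.coe_sort_coe, Finset.mem_coe]
      constructor
      · intro hj
        by_contra hj0
        have hj1 : j ∈ S1 := by
          have := Finset.mem_univ j
          rw [← hcover, Finset.mem_union] at this
          tauto
        exact h2 j hj1 hj
      · intro hj0
        have := h1 j hj0
        exact lt_of_not_ge this
    have hcompl : P n Eᶜ ≤ c + g n := by
      calc P n Eᶜ ≤ P n ((⋃ j ∈ S0, {ω | p n j ω ≤ α}) ∪ (⋃ j ∈ S1, {ω | α < p n j ω})) :=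
            measure_mono hsub
        _ ≤ P n (⋃ j ∈ S0, {ω | p n j ω ≤ α}) + P n (⋃ j ∈ S1, {ω | α < p n j ω}) :=
            measure_union_le _ _
        _ ≤ (∑ j ∈ S0, P n {ω | p n j ω ≤ α}) + ∑ j ∈ S1, P n {ω | α < p n j ω} :=
            add_le_add (measure_biUnion_finset_le _ _) (measure_biUnion_finset_le _ _)
        _ ≤ c + g n := by
            refine add_le_add ?_ le_rfl
            calc ∑ j ∈ S0, P n {ω | p n j ω ≤ α} ≤ ∑ _j ∈ S0, ENNReal.ofReal α :=
                  Finset.sum_le_sum (fun j hj => hlevel j hj n)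
              _ = (S0.card : ℝ≥0∞) * ENNReal.ofReal α := by
                  simp [Finset.sum_const, nsmul_eq_mul]
              _ ≤ c := by
                  rw [hc]
                  gcongr
                  exact_mod_cast (Finset.card_le_univ S0).trans (by simp)
    have h1le : (1 : ℝ≥0∞) ≤ P n E + P n Eᶜ := by
      have : (1 : ℝ≥0∞) = P n Set.univ := (measure_univ).symm
      rw [this, ← Set.union_compl_self E]
      exact measure_union_le _ _
    calc 1 - (c + g n) ≤ 1 - P n Eᶜ := tsub_le_tsub_left hcompl 1
      _ ≤ P n E := by
          rw [tsub_le_iff_right]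
          exact h1le
  have hcne : c ≠ ∞ := ENNReal.mul_ne_top (ENNReal.natCast_ne_top m) ENNReal.ofReal_ne_top
  have hlim : Tendsto (fun n => 1 - (c + g n)) atTop (nhds (1 - c)) := by
    have h1 : Tendsto (fun n => c + g n) atTop (nhds c) := by
      simpa using (tendsto_const_nhds (x := c)).add hgt
    exact ENNReal.Tendsto.sub tendsto_const_nhds h1 (Or.inr hcne)
  calc 1 - c = Filter.liminf (fun n => 1 - (c + g n)) atTop := (hlim.liminf_eq).symm
    _ ≤ _ := liminf_le_liminf (Filter.Eventually.of_forall key)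
end

section
/- Let m ≥ 1 and let the index set {1,…,m} be partitioned into disjoint sets S0 and S1. For each n ∈ ℕ, let p_{1,n},…,p_{m,n} be random variables with values in [0,1] on a probability space (Ω_n, P_n). Assume that for every α ∈ (0,1): (i) for every j ∈ S0 and every n, P_n(p_{j,n} ≤ α) ≤ α, and (ii) for every j ∈ S1, P_n(p_{j,n} > α) → 0 as n → ∞. Then the function α ↦ liminf_{n→∞} P_n({j : p_{j,n} > α} = S0) tends to 1 as α → 0 from the right. -/
open MeasureTheory Filter
open scoped ENNReal

theorem stmt_3 {m : ℕ} (hm : 1 ≤ m)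
    (S0 S1 : Finset (Fin m)) (hdisj : Disjoint S0 S1)
    (hcover : S0 ∪ S1 = Finset.univ)
    (Ω : ℕ → Type) [inst : ∀ n, MeasurableSpace (Ω n)]
    (P : ∀ n, Measure (Ω n)) [hP : ∀ n, IsProbabilityMeasure (P n)]
    (p : ∀ n, Fin m → Ω n → ℝ)
    (hpmeas : ∀ n j, Measurable (p n j))
    (hrange : ∀ n j ω, p n j ω ∈ Set.Icc (0 : ℝ) 1)
    (hlevel : ∀ α ∈ Set.Ioo (0 : ℝ) 1, ∀ j ∈ S0, ∀ n,
      P n {ω | p n j ω ≤ α} ≤ ENNReal.ofReal α)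
    (hcons : ∀ α ∈ Set.Ioo (0 : ℝ) 1, ∀ j ∈ S1,
      Tendsto (fun n => P n {ω | α < p n j ω}) atTop (nhds 0)) :
    Tendsto
      (fun α : ℝ =>
        Filter.liminf
          (fun n => P n {ω | {j | α < p n j ω} = (↑S0 : Set (Fin m))}) atTop)
      (nhdsWithin 0 (Set.Ioi 0)) (nhds 1) := by
  set L : ℝ → ℝ≥0∞ := fun α =>
    Filter.liminf
      (fun n => P n {ω | {j | α < p n j ω} = (↑S0 : Set (Fin m))}) atTop with hL
  -- upper bound: L α ≤ 1
  have hupper : ∀ α : ℝ, L α ≤ 1 := by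
    intro α
    calc L α ≤ Filter.liminf (fun _ : ℕ => (1 : ℝ≥0∞)) atTop :=
          Filter.liminf_le_liminf (Filter.Eventually.of_forall fun n => prob_le_one)
      _ = 1 := Filter.liminf_const 1
  -- lower bound
  have hlower : ∀ α ∈ Set.Ioo (0:ℝ) 1,
      (1 : ℝ≥0∞) - (S0.card : ℝ≥0∞) * ENNReal.ofReal α ≤ L α := by
    intro α hα
    set f : ℕ → ℝ≥0∞ := fun n => ∑ j ∈ S1, P n {ω | α < p n j ω} with hf
    have hfz : Tendsto f atTop (nhds 0) := by
      have := tendsto_finset_sum S1 (fun j hj => hcons α hα j hj)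
      simpa using this
    set c : ℝ≥0∞ := (S0.card : ℝ≥0∞) * ENNReal.ofReal α with hc
    have hbound : ∀ n, 1 - (c + f n) ≤
        P n {ω | {j | α < p n j ω} = (↑S0 : Set (Fin m))} := by
      intro n
      set E : Set (Ω n) := {ω | {j | α < p n j ω} = (↑S0 : Set (Fin m))} with hE
      set B : Set (Ω n) :=
        (⋃ j ∈ S0, {ω | p n j ω ≤ α}) ∪ ⋃ j ∈ S1, {ω | α < p n j ω} with hB
      have hsub : (Set.univ : Set (Ω n)) ⊆ E ∪ B := by
        intro ω _
        by_cases hωB : ω ∈ B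
        · exact Or.inr hωB
        · left
          simp only [hB, Set.mem_union, Set.mem_iUnion, Set.mem_setOf_eq, not_or,
            not_exists, not_le, not_lt] at hωB
          obtain ⟨h0, h1⟩ := hωB
          show {j | α < p n j ω} = (↑S0 : Set (Fin m))
          ext j
          simp only [Set.mem_setOf_eq, Finset.coe_sort_coe, Finset.mem_coe]
          constructor
          · intro hj
            by_contra hj0
            have hj1 : j ∈ S1 := by
              have := Finset.mem_union.mp (hcover ▸ Finset.mem_univ j)
              tauto
            exact absurd hj (not_lt.mpr (h1 j hj1))
          · intro hj
            exact h0 j hj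
      have h1le : (1 : ℝ≥0∞) ≤ P n E + P n B := by
        calc (1 : ℝ≥0∞) = P n Set.univ := (measure_univ).symm
          _ ≤ P n (E ∪ B) := measure_mono hsub
          _ ≤ P n E + P n B := measure_union_le E B
      have hPB : P n B ≤ c + f n := by
        calc P n B ≤ P n (⋃ j ∈ S0, {ω | p n j ω ≤ α})
              + P n (⋃ j ∈ S1, {ω | α < p n j ω}) := measure_union_le _ _
          _ ≤ (∑ j ∈ S0, P n {ω | p n j ω ≤ α}) + ∑ j ∈ S1, P n {ω | α < p n j ω} := by
              gcongr <;> exact measure_biUnion_finset_le _ _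
          _ ≤ c + f n := by
              gcongr
              calc (∑ j ∈ S0, P n {ω | p n j ω ≤ α})
                  ≤ ∑ _j ∈ S0, ENNReal.ofReal α :=
                    Finset.sum_le_sum fun j hj => hlevel α hα j hj n
                _ = c := by simp [hc, mul_comm]
      have : (1 : ℝ≥0∞) ≤ P n E + (c + f n) :=
        le_trans h1le (by gcongr)
      exact tsub_le_iff_right.mpr this
    have htend : Tendsto (fun n => (1 : ℝ≥0∞) - (c + f n)) atTop (nhds (1 - c)) := by
      have hsum : Tendsto (fun n => c + f n) atTop (nhds c) := by
        have := Tendsto.const_add c hfz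
        simpa using this
      have := ENNReal.Tendsto.sub (tendsto_const_nhds (x := (1:ℝ≥0∞))) hsum
        (Or.inl ENNReal.one_ne_top)
      simpa using this
    calc (1 : ℝ≥0∞) - c = Filter.liminf (fun n => (1 : ℝ≥0∞) - (c + f n)) atTop :=
          (htend.liminf_eq).symm
      _ ≤ L α := Filter.liminf_le_liminf (Filter.Eventually.of_forall hbound)
  -- squeeze
  have hlo : Tendsto (fun α : ℝ => (1 : ℝ≥0∞) - (S0.card : ℝ≥0∞) * ENNReal.ofReal α)
      (nhdsWithin 0 (Set.Ioi 0)) (nhds 1) := by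
    have h1 : Tendsto (fun α : ℝ => ENNReal.ofReal α) (nhdsWithin 0 (Set.Ioi 0))
        (nhds 0) := by
      have := (ENNReal.continuous_ofReal.tendsto 0)
      simpa using this.mono_left nhdsWithin_le_nhds
    have h2 : Tendsto (fun α : ℝ => (S0.card : ℝ≥0∞) * ENNReal.ofReal α)
        (nhdsWithin 0 (Set.Ioi 0)) (nhds 0) := by
      have := ENNReal.Tendsto.const_mul h1 (Or.inr (ENNReal.natCast_ne_top S0.card))
      simpa using this
    have := ENNReal.Tendsto.sub (tendsto_const_nhds (x := (1:ℝ≥0∞))) h2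
      (Or.inl ENNReal.one_ne_top)
    simpa using this
  have hmem : Set.Ioo (0:ℝ) 1 ∈ nhdsWithin (0:ℝ) (Set.Ioi 0) :=
    Ioo_mem_nhdsGT_of_mem (by simp [Set.mem_Ico])
  refine tendsto_of_tendsto_of_tendsto_of_le_of_le' hlo tendsto_const_nhds ?_ ?_
  · filter_upwards [hmem] with α hα using hlower α hα
  · exact Filter.Eventually.of_forall hupper
end

section
/- Let (Ω, P) be a probability space and let X : Ω → ℝ^d, Z : Ω → ℝ^m, ε : Ω → ℝ be random variables, W : Ω → ℝ taking values in {0,1} with P(W=1) = p, and g : ℝ^d → ℝ, h : ℝ^m → ℝ measurable. Assume Z and h(Z) are square-integrable, W is independent of the pair (X, Z), and ε is independent of (X, Z) with E[ε] = 0 and ε square-integrable. Let R = h(Z) − E[h(Z) | σ(X)] + τ(W − p) + ε, where E[· | σ(X)] denotes the conditional expectation with respect to the σ-algebra generated by X. Then for each coordinate j ∈ {1,…,m}, Cov(Z_j, R) = E[ E[Z_j·h(Z) | σ(X)] − E[Z_j | σ(X)]·E[h(Z) | σ(X)] ]. -/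
/-!
By bilinearity of covariance only the term `h(Z) − E[h(Z) | σ(X)]` of `R` contributes to
`Cov(Z_j, R)`, since `τ(W − p)` and `ε` are independent of `Z_j`. The mean of that term vanishes,
and the tower and pull-out properties give
`E[Z_j · E[h(Z) | σ(X)]] = E[E[Z_j | σ(X)] · E[h(Z) | σ(X)]]`, which turns the covariance into the expected conditional covariance.
-/

open MeasureTheory ProbabilityTheory

section CondExp

variable {Ω : Type*} {m m₀ : MeasurableSpace Ω} {μ : Measure Ω} {f g : Ω → ℝ}

lemma integral_mul_condExp_right [IsFiniteMeasure μ] (hm : m ≤ m₀) (hf : MemLp f 2 μ)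
    (hg : MemLp g 2 μ) :
    ∫ ω, f ω * μ[g|m] ω ∂μ = ∫ ω, μ[f|m] ω * μ[g|m] ω ∂μ :=
  calc ∫ ω, f ω * μ[g|m] ω ∂μ = ∫ ω, μ[f * μ[g|m] | m] ω ∂μ := (integral_condExp hm).symm
    _ = ∫ ω, μ[f|m] ω * μ[g|m] ω ∂μ :=
      integral_congr_ae <| condExp_mul_of_stronglyMeasurable_right stronglyMeasurable_condExp
        (hf.integrable_mul (hg.condExp one_le_two)) (hf.integrable one_le_two)

lemma covariance_sub_condExp_right [IsProbabilityMeasure μ] (hm : m ≤ m₀) (hf : MemLp f 2 μ)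
    (hg : MemLp g 2 μ) :
    cov[f, g - μ[g|m]; μ] = ∫ ω, (μ[f * g|m] ω - μ[f|m] ω * μ[g|m] ω) ∂μ := by
  have hgc : MemLp (μ[g|m]) 2 μ := hg.condExp one_le_two
  have hmean : ∫ ω, (g - μ[g|m]) ω ∂μ = 0 := by
    simp only [Pi.sub_apply]
    rw [integral_sub (hg.integrable one_le_two) integrable_condExp, integral_condExp hm, sub_self]
  rw [covariance_eq_sub hf (hg.sub hgc), hmean, mul_zero, sub_zero]
  calc ∫ ω, (f * (g - μ[g|m])) ω ∂μ = ∫ ω, (f * g) ω ∂μ - ∫ ω, f ω * μ[g|m] ω ∂μ := by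
        simp only [Pi.mul_apply, Pi.sub_apply, mul_sub]
        exact integral_sub (hf.integrable_mul hg) (hf.integrable_mul hgc)
    _ = ∫ ω, μ[f * g|m] ω ∂μ - ∫ ω, μ[f|m] ω * μ[g|m] ω ∂μ := by
        rw [integral_condExp hm, integral_mul_condExp_right hm hf hg]
    _ = _ := (integral_sub integrable_condExp ((hf.condExp one_le_two).integrable_mul hgc)).symm

end CondExp

theorem stmt_8_general {Ω : Type} [MeasurableSpace Ω]
    (P : Measure Ω) [IsProbabilityMeasure P]
    {d m : ℕ} (X : Ω → (Fin d → ℝ)) (Z : Ω → (Fin m → ℝ)) (eps W : Ω → ℝ)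
    (hXm : Measurable X) (hWm : Measurable W)
    (h : (Fin m → ℝ) → ℝ)
    (τ p : ℝ)
    (hWval : ∀ ω, W ω = 0 ∨ W ω = 1)
    (hZ2 : ∀ j, MemLp (fun ω => Z ω j) 2 P)
    (hhZ2 : MemLp (fun ω => h (Z ω)) 2 P)
    (heps2 : MemLp eps 2 P)
    (hWXZ : IndepFun W (fun ω => (X ω, Z ω)) P)
    (hepsXZ : IndepFun eps (fun ω => (X ω, Z ω)) P)
    (R : Ω → ℝ)
    (hR : ∀ ω, R ω = h (Z ω)
      - (P[(fun ω' => h (Z ω')) | MeasurableSpace.comap X inferInstance]) ω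
      + τ * (W ω - p) + eps ω) :
    ∀ j : Fin m,
      (∫ ω, Z ω j * R ω ∂P) - (∫ ω, Z ω j ∂P) * (∫ ω, R ω ∂P) =
        ∫ ω,
          ((P[(fun ω' => Z ω' j * h (Z ω')) |
              MeasurableSpace.comap X inferInstance]) ω -
            (P[(fun ω' => Z ω' j) | MeasurableSpace.comap X inferInstance]) ω *
            (P[(fun ω' => h (Z ω')) | MeasurableSpace.comap X inferInstance]) ω)
          ∂P := by
  intro j
  set σX := MeasurableSpace.comap X inferInstance
  set hZ := fun ω => h (Z ω)
  have hW2 : MemLp W 2 P := memLp_of_bounded (a := 0) (b := 1)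
    (.of_forall fun ω => by rcases hWval ω with hω | hω <;> simp [hω]) hWm.aestronglyMeasurable 2
  have hT2 : MemLp (fun ω => τ * (W ω - p)) 2 P := (hW2.sub (memLp_const p)).const_mul τ
  have hA2 : MemLp (hZ - P[hZ|σX]) 2 P := hhZ2.sub (hhZ2.condExp one_le_two)
  have hR_eq : R = hZ - P[hZ|σX] + (fun ω => τ * (W ω - p)) + eps := funext hR
  have hindT : IndepFun (fun ω => Z ω j) (fun ω => τ * (W ω - p)) P :=
    (hWXZ.comp (φ := fun w => τ * (w - p)) (by fun_prop)
      ((measurable_pi_apply j).comp measurable_snd)).symm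
  have hindE : IndepFun (fun ω => Z ω j) eps P :=
    (hepsXZ.comp measurable_id ((measurable_pi_apply j).comp measurable_snd)).symm
  have hR2 : MemLp R 2 P := hR_eq ▸ (hA2.add hT2).add heps2
  calc _ = cov[fun ω => Z ω j, R; P] := (covariance_eq_sub (hZ2 j) hR2).symm
    _ = cov[fun ω => Z ω j, hZ - P[hZ|σX]; P] := by
      rw [hR_eq, covariance_add_right (hZ2 j) (hA2.add hT2) heps2,
        covariance_add_right (hZ2 j) hA2 hT2, hindT.covariance_eq_zero (hZ2 j) hT2,
        hindE.covariance_eq_zero (hZ2 j) heps2, add_zero, add_zero]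
    _ = _ := covariance_sub_condExp_right hXm.comap_le (hZ2 j) hhZ2

theorem stmt_8 {Ω : Type} [MeasurableSpace Ω]
    (P : Measure Ω) [IsProbabilityMeasure P]
    {d m : ℕ} (X : Ω → (Fin d → ℝ)) (Z : Ω → (Fin m → ℝ)) (eps W : Ω → ℝ)
    (hXm : Measurable X) (hZm : Measurable Z)
    (hepsm : Measurable eps) (hWm : Measurable W)
    (g : (Fin d → ℝ) → ℝ) (h : (Fin m → ℝ) → ℝ)
    (hg : Measurable g) (hh : Measurable h)
    (τ p : ℝ)
    (hWval : ∀ ω, W ω = 0 ∨ W ω = 1)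
    (hp : (P {ω | W ω = 1}).toReal = p)
    (hZ2 : ∀ j, MemLp (fun ω => Z ω j) 2 P)
    (hhZ2 : MemLp (fun ω => h (Z ω)) 2 P)
    (heps2 : MemLp eps 2 P)
    (hWXZ : IndepFun W (fun ω => (X ω, Z ω)) P)
    (hepsXZ : IndepFun eps (fun ω => (X ω, Z ω)) P)
    (heps0 : ∫ ω, eps ω ∂P = 0)
    (R : Ω → ℝ)
    (hR : ∀ ω, R ω = h (Z ω)
      - (P[(fun ω' => h (Z ω')) | MeasurableSpace.comap X inferInstance]) ω
      + τ * (W ω - p) + eps ω) :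
    ∀ j : Fin m,
      (∫ ω, Z ω j * R ω ∂P) - (∫ ω, Z ω j ∂P) * (∫ ω, R ω ∂P) =
        ∫ ω,
          ((P[(fun ω' => Z ω' j * h (Z ω')) |
              MeasurableSpace.comap X inferInstance]) ω -
            (P[(fun ω' => Z ω' j) | MeasurableSpace.comap X inferInstance]) ω *
            (P[(fun ω' => h (Z ω')) | MeasurableSpace.comap X inferInstance]) ω)
          ∂P :=
  stmt_8_general P X Z eps W hXm hWm h τ p hWval hZ2 hhZ2 heps2 hWXZ hepsXZ R hR
end

section
/- Let (Ω, P) be a probability space and let X : Ω → ℝ^d, Z : Ω → ℝ^m, ε : Ω → ℝ be random variables and h : ℝ^m → ℝ measurable, with Z, h(Z), ε square-integrable. Assume ε is independent of the pair (X, Z), E[ε] = 0, and the covariance matrix of Z is the identity: Cov(Z_i, Z_j) = δ_{ij} for all i, j. Let γ ∈ ℝ^m be given by γ_j = Cov(Z_j, h(Z) − E[h(Z) | σ(X)]). Then Var[h(Z) − E[h(Z) | σ(X)] − ⟨γ, Z⟩ + ε] = E[(h(Z) − E[h(Z) | σ(X)])²] − ‖γ‖₂² + Var[ε], where E[· | σ(X)]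 denotes the conditional expectation with respect to the σ-algebra generated by X. -/
/-!
Write `R = h(Z) - E[h(Z) | X]` and `L = ⟨γ, Z⟩`. Since `ε` is independent of `(X, Z)` and `R - L`
is a function of `(X, Z)`, the variance splits as `Var[R - L] + Var[ε]`. Expanding
`Var[R - L] = Var[R] - 2 Cov(R, L) + Var[L]`, the identity covariance of `Z` gives
`Var[L] = ‖γ‖²` and the definition of `γ` gives `Cov(R, L) = ‖γ‖²`; finally `E[R] = 0`, so
`Var[R] = E[R²]`.
-/

open MeasureTheory ProbabilityTheory

section Regression

variable {Ω ι : Type*} {mΩ : MeasurableSpace Ω} {μ : Measure Ω} [Fintype ι] [DecidableEq ι]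
  {Z : ι → Ω → ℝ} {R : Ω → ℝ} {γ : ι → ℝ}

lemma variance_sum_mul_of_covariance_eq_ite [IsFiniteMeasure μ] (hZ : ∀ i, MemLp (Z i) 2 μ)
    (hcov : ∀ i j, cov[Z i, Z j; μ] = if i = j then 1 else 0) :
    Var[fun ω ↦ ∑ i, γ i * Z i ω; μ] = ∑ i, γ i ^ 2 := by
  rw [variance_fun_sum (X := fun i ω ↦ γ i * Z i ω) fun i ↦ (hZ i).const_mul (γ i)]
  simp [covariance_const_mul_left, covariance_const_mul_right, hcov, sq]

lemma variance_sub_sum_mul_of_covariance_eq_ite [IsFiniteMeasure μ] (hR : MemLp R 2 μ)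
    (hZ : ∀ i, MemLp (Z i) 2 μ) (hcov : ∀ i j, cov[Z i, Z j; μ] = if i = j then 1 else 0)
    (hγ : ∀ i, cov[Z i, R; μ] = γ i) :
    Var[fun ω ↦ R ω - ∑ i, γ i * Z i ω; μ] = Var[R; μ] - ∑ i, γ i ^ 2 := by
  have hL : MemLp (fun ω ↦ ∑ i, γ i * Z i ω) 2 μ :=
    memLp_finsetSum _ fun i _ ↦ (hZ i).const_mul (γ i)
  have hcovRL : cov[R, fun ω ↦ ∑ i, γ i * Z i ω; μ] = ∑ i, γ i ^ 2 := by
    rw [covariance_fun_sum_right (X := fun i ω ↦ γ i * Z i ω)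
      (fun i ↦ (hZ i).const_mul (γ i)) hR]
    exact Finset.sum_congr rfl fun i _ ↦ by
      rw [covariance_const_mul_right, covariance_comm, hγ, sq]
  rw [variance_fun_sub hR hL, hcovRL, variance_sum_mul_of_covariance_eq_ite hZ hcov]
  ring

end Regression

lemma ProbabilityTheory.IndepFun.of_measurable_comap_right {Ω β γ δ : Type*}
    {mΩ : MeasurableSpace Ω} {μ : Measure Ω} [MeasurableSpace β] [MeasurableSpace γ]
    [MeasurableSpace δ] {f : Ω → β} {g : Ω → γ} {k : Ω → δ} (hfg : IndepFun f g μ)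
    (hk : Measurable[MeasurableSpace.comap g inferInstance] k) : IndepFun f k μ := by
  rw [IndepFun_iff_Indep] at hfg ⊢
  exact indep_of_indep_of_le_right hfg hk.comap_le

lemma measurable_condExp_comap_prodMk {Ω α β : Type*} {mΩ : MeasurableSpace Ω}
    {μ : Measure Ω} [MeasurableSpace α] [MeasurableSpace β] (X : Ω → α) (Z : Ω → β)
    (f : Ω → ℝ) :
    Measurable[MeasurableSpace.comap (fun ω ↦ (X ω, Z ω)) inferInstance]
      (μ[f | MeasurableSpace.comap X inferInstance]) :=
  stronglyMeasurable_condExp.measurable.mono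
    (measurable_fst.comp (comap_measurable fun ω ↦ (X ω, Z ω))).comap_le le_rfl

theorem stmt_11_general {Ω : Type} [MeasurableSpace Ω]
    (P : Measure Ω) [IsProbabilityMeasure P]
    {d m : ℕ} (X : Ω → (Fin d → ℝ)) (Z : Ω → (Fin m → ℝ)) (eps : Ω → ℝ)
    (hXm : Measurable X)
    (h : (Fin m → ℝ) → ℝ) (hh : Measurable h)
    (hZ2 : ∀ j, MemLp (fun ω => Z ω j) 2 P)
    (hh2 : MemLp (fun ω => h (Z ω)) 2 P)
    (heps2 : MemLp eps 2 P)
    (hepsXZ : IndepFun eps (fun ω => (X ω, Z ω)) P)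
    (hZcov : ∀ i j : Fin m,
      (∫ ω, Z ω i * Z ω j ∂P) - (∫ ω, Z ω i ∂P) * (∫ ω, Z ω j ∂P) =
        if i = j then 1 else 0)
    (γ : Fin m → ℝ)
    (hγ : ∀ j, γ j =
      (∫ ω, Z ω j * (h (Z ω) -
        (P[(fun ω' => h (Z ω')) | MeasurableSpace.comap X inferInstance]) ω) ∂P) -
      (∫ ω, Z ω j ∂P) *
      (∫ ω, (h (Z ω) -
        (P[(fun ω' => h (Z ω')) | MeasurableSpace.comap X inferInstance]) ω) ∂P)) :
    (∫ ω, (h (Z ω) -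
        (P[(fun ω' => h (Z ω')) | MeasurableSpace.comap X inferInstance]) ω -
        (∑ j, γ j * Z ω j) + eps ω) ^ 2 ∂P) -
      (∫ ω, (h (Z ω) -
        (P[(fun ω' => h (Z ω')) | MeasurableSpace.comap X inferInstance]) ω -
        (∑ j, γ j * Z ω j) + eps ω) ∂P) ^ 2 =
    (∫ ω, (h (Z ω) -
        (P[(fun ω' => h (Z ω')) | MeasurableSpace.comap X inferInstance]) ω) ^ 2 ∂P) -
      (∑ j, γ j ^ 2) +
      ((∫ ω, eps ω ^ 2 ∂P) - (∫ ω, eps ω ∂P) ^ 2) := by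
  set R : Ω → ℝ := fun ω ↦
    h (Z ω) - P[(fun ω' => h (Z ω')) | MeasurableSpace.comap X inferInstance] ω
  let L : Ω → ℝ := fun ω ↦ ∑ j, γ j * Z ω j
  have hR2 : MemLp R 2 P := hh2.sub (hh2.condExp one_le_two)
  have hL2 : MemLp L 2 P := memLp_finsetSum _ fun j _ ↦ (hZ2 j).const_mul (γ j)
  have hR0 : ∫ ω, R ω ∂P = 0 := by
    rw [integral_sub (hh2.integrable one_le_two) integrable_condExp,
      integral_condExp hXm.comap_le, sub_self]
  have hcovZ : ∀ i j, cov[fun ω ↦ Z ω i, fun ω ↦ Z ω j; P] = if i = j then 1 else 0 :=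
    fun i j ↦ (covariance_eq_sub (hZ2 i) (hZ2 j)).trans (hZcov i j)
  have hcovZR : ∀ j, cov[fun ω ↦ Z ω j, R; P] = γ j :=
    fun j ↦ (covariance_eq_sub (hZ2 j) hR2).trans (hγ j).symm
  have hind : IndepFun (fun ω ↦ R ω - L ω) eps P := by
    have hZ : Measurable[MeasurableSpace.comap (fun ω ↦ (X ω, Z ω)) inferInstance] Z :=
      measurable_snd.comp (comap_measurable _)
    refine (hepsXZ.of_measurable_comap_right ?_).symm
    exact ((hh.comp hZ).sub (measurable_condExp_comap_prodMk X Z _)).sub <|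
      Finset.measurable_sum _ fun j _ ↦ ((measurable_pi_apply j).comp hZ).const_mul (γ j)
  calc _ = Var[fun ω ↦ (R ω - L ω) + eps ω; P] :=
        (variance_eq_sub ((hR2.sub hL2).add heps2)).symm
    _ = Var[fun ω ↦ R ω - L ω; P] + Var[eps; P] := hind.variance_fun_add (hR2.sub hL2) heps2
    _ = Var[R; P] - ∑ j, γ j ^ 2 + Var[eps; P] := by
      rw [variance_sub_sum_mul_of_covariance_eq_ite hR2 hZ2 hcovZ hcovZR]
    _ = _ := by
      rw [variance_of_integral_eq_zero hR2.aemeasurable hR0, variance_eq_sub heps2]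
      rfl

theorem stmt_11 {Ω : Type} [MeasurableSpace Ω]
    (P : Measure Ω) [IsProbabilityMeasure P]
    {d m : ℕ} (X : Ω → (Fin d → ℝ)) (Z : Ω → (Fin m → ℝ)) (eps : Ω → ℝ)
    (hXm : Measurable X) (hZm : Measurable Z) (hepsm : Measurable eps)
    (h : (Fin m → ℝ) → ℝ) (hh : Measurable h)
    (hZ2 : ∀ j, MemLp (fun ω => Z ω j) 2 P)
    (hh2 : MemLp (fun ω => h (Z ω)) 2 P)
    (heps2 : MemLp eps 2 P)
    (hepsXZ : IndepFun eps (fun ω => (X ω, Z ω)) P)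
    (heps0 : ∫ ω, eps ω ∂P = 0)
    (hZcov : ∀ i j : Fin m,
      (∫ ω, Z ω i * Z ω j ∂P) - (∫ ω, Z ω i ∂P) * (∫ ω, Z ω j ∂P) =
        if i = j then 1 else 0)
    (γ : Fin m → ℝ)
    (hγ : ∀ j, γ j =
      (∫ ω, Z ω j * (h (Z ω) -
        (P[(fun ω' => h (Z ω')) | MeasurableSpace.comap X inferInstance]) ω) ∂P) -
      (∫ ω, Z ω j ∂P) *
      (∫ ω, (h (Z ω) -
        (P[(fun ω' => h (Z ω')) | MeasurableSpace.comap X inferInstance]) ω) ∂P)) :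
    (∫ ω, (h (Z ω) -
        (P[(fun ω' => h (Z ω')) | MeasurableSpace.comap X inferInstance]) ω -
        (∑ j, γ j * Z ω j) + eps ω) ^ 2 ∂P) -
      (∫ ω, (h (Z ω) -
        (P[(fun ω' => h (Z ω')) | MeasurableSpace.comap X inferInstance]) ω -
        (∑ j, γ j * Z ω j) + eps ω) ∂P) ^ 2 =
    (∫ ω, (h (Z ω) -
        (P[(fun ω' => h (Z ω')) | MeasurableSpace.comap X inferInstance]) ω) ^ 2 ∂P) -
      (∑ j, γ j ^ 2) +
      ((∫ ω, eps ω ^ 2 ∂P) - (∫ ω, eps ω ∂P) ^ 2) :=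
  stmt_11_general P X Z eps hXm h hh hZ2 hh2 heps2 hepsXZ hZcov γ hγ
end

section
/- Let (Ω, P) be a probability space, X : Ω → ℝ^d and Z : Ω → ℝ^m independent square-integrable random vectors whose covariance matrices are the identity matrices I_d and I_m respectively. Let β_g ∈ ℝ^d and β_h ∈ ℝ^m and set g(x) = ⟨β_g, x⟩ and h(z) = ⟨β_h, z⟩. Then: (i) Var[g(X) + E[h(Z) | σ(X)]] = ‖β_g‖₂², and (ii) for each j ∈ {1,…,m}, Cov(Z_j, h(Z) − E[h(Z) | σ(X)]) = (β_h)_j, so the adjustment coefficient γ satisfies ‖γ‖₂² = ‖β_h‖₂². Here E[· | σ(X)] denotes the conditional expectation with respect to the σ-algebra generated by X. -/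
/-!
By independence, `E[h(Z) | σ(X)]` is a.e. the constant `E[h(Z)]`. Hence the quantity in (i) is the
variance of `⟨β_g, X⟩` plus a constant, and `γ_j` is the covariance of `Z_j` with
`⟨β_h, Z⟩ - E[h(Z)]`. For a random vector `W` with identity covariance, bilinearity gives
`Var ⟨β, W⟩ = ‖β‖²` and `Cov(W_j, ⟨β, W⟩) = β_j`.
-/

open MeasureTheory ProbabilityTheory Matrix

section Isotropic

variable {Ω ι : Type*} [MeasurableSpace Ω] {μ : Measure Ω} [IsFiniteMeasure μ]
  [Fintype ι] [DecidableEq ι] {W : Ω → ι → ℝ}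

lemma covariance_apply_dotProduct_of_isotropic (hW : ∀ i, MemLp (fun ω => W ω i) 2 μ)
    (hcov : ∀ i i', cov[fun ω => W ω i, fun ω => W ω i'; μ] = if i = i' then 1 else 0)
    (β : ι → ℝ) (j : ι) :
    cov[fun ω => W ω j, fun ω => β ⬝ᵥ W ω; μ] = β j := by
  simp only [dotProduct]
  rw [covariance_fun_sum_right (fun i => (hW i).const_mul (β i)) (hW j)]
  simp [covariance_const_mul_right, hcov]

lemma variance_dotProduct_of_isotropic (hW : ∀ i, MemLp (fun ω => W ω i) 2 μ)
    (hcov : ∀ i i', cov[fun ω => W ω i, fun ω => W ω i'; μ] = if i = i' then 1 else 0)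
    (β : ι → ℝ) :
    Var[fun ω => β ⬝ᵥ W ω; μ] = ∑ i, β i ^ 2 := by
  simp only [dotProduct]
  rw [variance_fun_sum (fun i => (hW i).const_mul (β i))]
  simp [covariance_const_mul_left, covariance_const_mul_right, hcov, sq]

end Isotropic

lemma memLp_dotProduct {Ω ι : Type*} [MeasurableSpace Ω] {μ : Measure Ω} [Fintype ι]
    {p : ENNReal} {W : Ω → ι → ℝ} (hW : ∀ i, MemLp (fun ω => W ω i) p μ) (β : ι → ℝ) :
    MemLp (fun ω => β ⬝ᵥ W ω) p μ :=
  memLp_finsetSum _ fun i _ => (hW i).const_mul (β i)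

section AeAffine

variable {Ω : Type*} [MeasurableSpace Ω] {μ : Measure Ω} [IsProbabilityMeasure μ]
  {F S : Ω → ℝ} {c : ℝ}

lemma integral_sq_sub_sq_integral_of_ae_eq_add_const (hS : MemLp S 2 μ)
    (hF : F =ᵐ[μ] fun ω => S ω + c) :
    (∫ ω, F ω ^ 2 ∂μ) - (∫ ω, F ω ∂μ) ^ 2 = Var[S; μ] := calc
  _ = (∫ ω, (S ω + c) ^ 2 ∂μ) - (∫ ω, S ω + c ∂μ) ^ 2 := by
    rw [integral_congr_ae (g := fun ω => (S ω + c) ^ 2) (hF.mono fun ω hω => by rw [hω]),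
      integral_congr_ae hF]
  _ = Var[fun ω => S ω + c; μ] := (variance_eq_sub (hS.add (memLp_const c))).symm
  _ = Var[S; μ] := variance_add_const hS.aestronglyMeasurable c

lemma integral_mul_sub_mul_integral_of_ae_eq_sub_const {Y : Ω → ℝ} (hY : MemLp Y 2 μ)
    (hS : MemLp S 2 μ) (hF : F =ᵐ[μ] fun ω => S ω - c) :
    (∫ ω, Y ω * F ω ∂μ) - (∫ ω, Y ω ∂μ) * (∫ ω, F ω ∂μ) = cov[Y, S; μ] := calc
  _ = (∫ ω, Y ω * (S ω - c) ∂μ) - (∫ ω, Y ω ∂μ) * (∫ ω, S ω - c ∂μ) := by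
    rw [integral_congr_ae (g := fun ω => Y ω * (S ω - c)) (hF.mono fun ω hω => by rw [hω]),
      integral_congr_ae hF]
  _ = cov[Y, fun ω => S ω - c; μ] := (covariance_eq_sub hY (hS.sub (memLp_const c))).symm
  _ = cov[Y, S; μ] := covariance_sub_const_right (hS.integrable one_le_two) c

end AeAffine

lemma condExp_comp_comap_ae_eq_integral_of_indepFun {Ω α β E : Type*} [MeasurableSpace Ω]
    [MeasurableSpace α] [MeasurableSpace β] [NormedAddCommGroup E] [NormedSpace ℝ E]
    [CompleteSpace E] {μ : Measure Ω} [IsFiniteMeasure μ] {X : Ω → α} {Z : Ω → β}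
    (hX : Measurable X) (hZ : Measurable Z) (hXZ : IndepFun X Z μ) {φ : β → E}
    (hφ : StronglyMeasurable φ) :
    μ[fun ω => φ (Z ω) | MeasurableSpace.comap X inferInstance] =ᵐ[μ]
      fun _ => ∫ ω, φ (Z ω) ∂μ := by
  have := isFiniteMeasure_trim (μ := μ) hX.comap_le
  exact condExp_indep_eq hZ.comap_le hX.comap_le
    (hφ.comp_measurable (comap_measurable Z)) ((IndepFun_iff_Indep Z X μ).mp hXZ.symm)

theorem stmt_14 {Ω : Type} [MeasurableSpace Ω]
    (P : Measure Ω) [IsProbabilityMeasure P]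
    {d m : ℕ} (X : Ω → (Fin d → ℝ)) (Z : Ω → (Fin m → ℝ))
    (hXm : Measurable X) (hZm : Measurable Z)
    (hindep : IndepFun X Z P)
    (hX2 : ∀ i, MemLp (fun ω => X ω i) 2 P)
    (hZ2 : ∀ j, MemLp (fun ω => Z ω j) 2 P)
    (hXcov : ∀ i i' : Fin d,
      (∫ ω, X ω i * X ω i' ∂P) - (∫ ω, X ω i ∂P) * (∫ ω, X ω i' ∂P) =
        if i = i' then 1 else 0)
    (hZcov : ∀ j j' : Fin m,
      (∫ ω, Z ω j * Z ω j' ∂P) - (∫ ω, Z ω j ∂P) * (∫ ω, Z ω j' ∂P) =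
        if j = j' then 1 else 0)
    (βg : Fin d → ℝ) (βh : Fin m → ℝ)
    (g : (Fin d → ℝ) → ℝ) (h : (Fin m → ℝ) → ℝ)
    (hgdef : ∀ x, g x = ∑ i, βg i * x i)
    (hhdef : ∀ z, h z = ∑ j, βh j * z j)
    (γ : Fin m → ℝ)
    (hγ : ∀ j, γ j =
      (∫ ω, Z ω j * (h (Z ω) -
        (P[(fun ω' => h (Z ω')) | MeasurableSpace.comap X inferInstance]) ω) ∂P) -
      (∫ ω, Z ω j ∂P) *
      (∫ ω, (h (Z ω) -
        (P[(fun ω' => h (Z ω')) | MeasurableSpace.comap X inferInstance]) ω) ∂P)) :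
    ((∫ ω, (g (X ω) +
        (P[(fun ω' => h (Z ω')) | MeasurableSpace.comap X inferInstance]) ω) ^ 2 ∂P) -
      (∫ ω, (g (X ω) +
        (P[(fun ω' => h (Z ω')) | MeasurableSpace.comap X inferInstance]) ω) ∂P) ^ 2 =
      ∑ i, βg i ^ 2) ∧
    (∀ j, γ j = βh j) ∧
    (∑ j, γ j ^ 2 = ∑ j, βh j ^ 2) := by
  set f := P[(fun ω' => h (Z ω')) | MeasurableSpace.comap X inferInstance]
  set c := ∫ ω, h (Z ω) ∂P
  have hg : ∀ x, g x = βg ⬝ᵥ x := hgdef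
  have hh : ∀ z, h z = βh ⬝ᵥ z := hhdef
  have hf : f =ᵐ[P] fun _ => c := by
    refine condExp_comp_comap_ae_eq_integral_of_indepFun hXm hZm hindep ?_
    rw [funext hh]
    exact (continuous_const.dotProduct continuous_id).stronglyMeasurable
  have hgf : (fun ω => g (X ω) + f ω) =ᵐ[P] fun ω => βg ⬝ᵥ X ω + c :=
    hf.mono fun ω hω => by simp [hω, hg]
  have hhf : (fun ω => h (Z ω) - f ω) =ᵐ[P] fun ω => βh ⬝ᵥ Z ω - c :=
    hf.mono fun ω hω => by simp [hω, hh]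
  have hvar := integral_sq_sub_sq_integral_of_ae_eq_add_const (memLp_dotProduct hX2 βg) hgf
  rw [variance_dotProduct_of_isotropic hX2
    (fun i i' => (covariance_eq_sub (hX2 i) (hX2 i')).trans (hXcov i i')) βg] at hvar
  have hγβ (j : Fin m) : γ j = βh j := by
    rw [hγ j, integral_mul_sub_mul_integral_of_ae_eq_sub_const (hZ2 j)
      (memLp_dotProduct hZ2 βh) hhf]
    exact covariance_apply_dotProduct_of_isotropic hZ2
      (fun j j' => (covariance_eq_sub (hZ2 j) (hZ2 j')).trans (hZcov j j')) βh j
  exact ⟨hvar, hγβ, by simp_rw [hγβ]⟩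
end

section
/- Let n ≥ 1, let z_1, …, z_n ∈ ℝ^m with mean z̄ = (1/n)∑_{i=1}^n z_i, and assume the sample covariance matrix M = (1/n)∑_{i=1}^n (z_i − z̄)(z_i − z̄)ᵀ is invertible. For a = (a_1,…,a_n) ∈ ℝ^n with mean ā, define the least-squares coefficient γ̂(a) = M⁻¹ · ((1/n)∑_{i=1}^n (z_i − z̄)(a_i − ā)). Then for all a, b ∈ ℝ^n, ‖γ̂(a) − γ̂(b)‖₂ ≤ ‖M⁻¹‖_op · √(Tr M) · √((1/n)∑_{i=1}^n (a_i − b_i)²), where ‖M⁻¹‖_op is the operator norm of M⁻¹ on ℝ^m with the Euclidean norm. -/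
theorem stmt_17 {n m : ℕ} (hn : 1 ≤ n)
    (z : Fin n → EuclideanSpace ℝ (Fin m))
    (zbar : EuclideanSpace ℝ (Fin m)) (hzbar : zbar = (n : ℝ)⁻¹ • ∑ i, z i)
    (M : Matrix (Fin m) (Fin m) ℝ)
    (hM : ∀ k l, M k l =
      (1 / (n : ℝ)) * ∑ i, (z i k - zbar k) * (z i l - zbar l))
    (hMinv : IsUnit M)
    (γhat : (Fin n → ℝ) → EuclideanSpace ℝ (Fin m))
    (hγhat : ∀ a : Fin n → ℝ,
      γhat a = Matrix.toEuclideanCLM (𝕜 := ℝ) M⁻¹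
        ((n : ℝ)⁻¹ • ∑ i, (a i - (n : ℝ)⁻¹ * ∑ i', a i') • (z i - zbar))) :
    ∀ a b : Fin n → ℝ,
      ‖γhat a - γhat b‖ ≤
        ‖Matrix.toEuclideanCLM (𝕜 := ℝ) M⁻¹‖ * Real.sqrt M.trace *
          Real.sqrt ((1 / (n : ℝ)) * ∑ i, (a i - b i) ^ 2) := by
  intro a b
  have hn0 : (0:ℝ) < (n:ℝ) := by exact_mod_cast hn
  set T := Matrix.toEuclideanCLM (𝕜 := ℝ) M⁻¹ with hT
  set c : Fin n → ℝ := fun i => a i - b i with hc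
  set cbar : ℝ := (n : ℝ)⁻¹ * ∑ i', c i' with hcbar
  set w : Fin n → EuclideanSpace ℝ (Fin m) := fun i => z i - zbar with hw
  -- the difference
  have key : γhat a - γhat b = T ((n : ℝ)⁻¹ • ∑ i, (c i - cbar) • w i) := by
    rw [hγhat, hγhat, ← map_sub, ← smul_sub, ← Finset.sum_sub_distrib]
    congr 2
    refine Finset.sum_congr rfl fun i _ => ?_
    rw [← sub_smul]
    congr 1
    simp only [hc, hcbar, Finset.sum_sub_distrib]
    ring
  rw [key]
  have step1 : ‖T ((n : ℝ)⁻¹ • ∑ i, (c i - cbar) • w i)‖ ≤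
      ‖T‖ * ((n : ℝ)⁻¹ * ∑ i, |c i - cbar| * ‖w i‖) := by
    refine (T.le_opNorm _).trans ?_
    gcongr
    rw [norm_smul, norm_inv, Real.norm_natCast]
    gcongr
    refine (norm_sum_le _ _).trans ?_
    refine le_of_eq (Finset.sum_congr rfl fun i _ => ?_)
    rw [norm_smul, Real.norm_eq_abs]
  refine step1.trans ?_
  rw [mul_assoc]
  refine mul_le_mul_of_nonneg_left ?_ (norm_nonneg T)
  -- Cauchy-Schwarz
  have hcs : (∑ i, |c i - cbar| * ‖w i‖) ≤
      Real.sqrt (∑ i, (c i - cbar) ^ 2) * Real.sqrt (∑ i, ‖w i‖ ^ 2) := by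
    have h := Finset.sum_mul_sq_le_sq_mul_sq Finset.univ (fun i => |c i - cbar|)
      (fun i => ‖w i‖)
    have h1 : (∑ i, |c i - cbar| * ‖w i‖) ^ 2 ≤
        (∑ i, (c i - cbar) ^ 2) * ∑ i, ‖w i‖ ^ 2 := by
      simpa [sq_abs] using h
    have h2 := Real.sqrt_le_sqrt h1
    rwa [Real.sqrt_sq (Finset.sum_nonneg fun i _ =>
        mul_nonneg (abs_nonneg _) (norm_nonneg _)),
      Real.sqrt_mul (Finset.sum_nonneg fun i _ => sq_nonneg _)] at h2
  have hinv : (0:ℝ) ≤ (n : ℝ)⁻¹ := inv_nonneg.2 hn0.le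
  calc (n : ℝ)⁻¹ * ∑ i, |c i - cbar| * ‖w i‖
      ≤ (n : ℝ)⁻¹ * (Real.sqrt (∑ i, (c i - cbar) ^ 2) * Real.sqrt (∑ i, ‖w i‖ ^ 2)) :=
        mul_le_mul_of_nonneg_left hcs hinv
    _ = Real.sqrt ((n : ℝ)⁻¹ * ∑ i, ‖w i‖ ^ 2) *
          Real.sqrt ((n : ℝ)⁻¹ * ∑ i, (c i - cbar) ^ 2) := by
        rw [Real.sqrt_mul hinv, Real.sqrt_mul hinv]
        have hss : (n : ℝ)⁻¹ = Real.sqrt (n : ℝ)⁻¹ * Real.sqrt (n : ℝ)⁻¹ :=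
          (Real.mul_self_sqrt hinv).symm
        calc (n : ℝ)⁻¹ * (Real.sqrt (∑ i, (c i - cbar) ^ 2) * Real.sqrt (∑ i, ‖w i‖ ^ 2))
            = (Real.sqrt (n : ℝ)⁻¹ * Real.sqrt (n : ℝ)⁻¹) *
              (Real.sqrt (∑ i, (c i - cbar) ^ 2) * Real.sqrt (∑ i, ‖w i‖ ^ 2)) := by
              rw [← hss]
          _ = Real.sqrt (n : ℝ)⁻¹ * Real.sqrt (∑ i, ‖w i‖ ^ 2) *
              (Real.sqrt (n : ℝ)⁻¹ * Real.sqrt (∑ i, (c i - cbar) ^ 2)) := by ring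
    _ ≤ Real.sqrt M.trace * Real.sqrt ((1 / (n : ℝ)) * ∑ i, (a i - b i) ^ 2) := by
        have htr : M.trace = (n : ℝ)⁻¹ * ∑ i, ‖w i‖ ^ 2 := by
          rw [Matrix.trace]
          simp only [Matrix.diag_apply, hM, one_div]
          rw [← Finset.mul_sum, Finset.sum_comm]
          congr 1
          refine Finset.sum_congr rfl fun i _ => ?_
          rw [EuclideanSpace.norm_eq, Real.sq_sqrt (Finset.sum_nonneg fun k _ => sq_nonneg _)]
          refine Finset.sum_congr rfl fun k _ => ?_
          simp [hw, sq]
        rw [htr, one_div]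
        refine mul_le_mul_of_nonneg_left ?_ (Real.sqrt_nonneg _)
        refine Real.sqrt_le_sqrt (mul_le_mul_of_nonneg_left ?_ hinv)
        -- variance ≤ second moment
        have hsum : ∑ i, c i = (n : ℝ) * cbar := by
          rw [hcbar, ← mul_assoc, mul_inv_cancel₀ hn0.ne', one_mul]
        have expand : ∑ i, (c i - cbar) ^ 2 = (∑ i, c i ^ 2) - (n : ℝ) * cbar ^ 2 := by
          have h3 : ∀ i, (c i - cbar) ^ 2 = c i ^ 2 - 2 * cbar * c i + cbar ^ 2 := fun i => by
            ring
          simp only [h3, Finset.sum_add_distrib, Finset.sum_sub_distrib, ← Finset.mul_sum,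
            hsum, Finset.sum_const, Finset.card_univ, Fintype.card_fin, nsmul_eq_mul]
          ring
        have hvar : ∑ i, (c i - cbar) ^ 2 ≤ ∑ i, c i ^ 2 := by
          rw [expand]
          nlinarith [sq_nonneg cbar, hn0]
        simpa [hc] using hvar
end
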